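/- arXiv:1903.02890 — 4 statements merged into one kernel-verified Lean document; each statement's English description precedes it below -/
import Mathlib

section
/- Let (K, w) be a weighted simplicial complex over an integral domain R with 1, with all weights nonzero. Then the weighted boundary maps satisfy ∂_{n-1} ∘ ∂_n = 0 on the chain groups C_n(K; R). -/
/-!
Expanding `∂ ∘ ∂` on an ordered simplex `σ` gives a sum over pairs `(i, j)` of
`(-1)^(i+j) q(σ, dᵢσ) q(dᵢσ, dⱼdᵢσ) dⱼdᵢσ`. Every codimension-two face arises from exactly two
pairs, related by the simplicial identity, and with opposite signs. Their coefficients agree: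
both multiply `w(dⱼdᵢσ)` to `w(σ)`, and nonzero weights can be cancelled in a domain.
-/

open Finset Function

theorem Finsupp.eq_sum_single_of_injective {ι α R : Type*} [Fintype ι] [AddCommMonoid R]
    {g : ι → α} (hg : Injective g) (c : ι → R) (x : α →₀ R) (hx : ∀ i, x (g i) = c i)
    (hx₀ : ∀ a, (∀ i, a ≠ g i) → x a = 0) :
    x = ∑ i, single (g i) (c i) := by
  classical
  ext a
  rw [Finsupp.finsetSum_apply]
  by_cases ha : ∃ i, a = g i
  · obtain ⟨i, rfl⟩ := ha
    simp [single_apply, hg.eq_iff, hx]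
  · push Not at ha
    simp [hx₀ a ha, Ne.symm (ha _)]

/-- The pairs `(i, j)` and `(i.succAbove j, j.predAbove i)` index the same codimension-two face
with opposite signs, and this pairing is a fixed-point-free involution. -/
theorem Fin.sum_sum_neg_one_pow_smul_eq_zero {R M : Type*} [Ring R] [AddCommGroup M]
    [Module R M] {n : ℕ} (f : Fin (n + 2) → Fin (n + 1) → M)
    (hf : ∀ i j, f (i.succAbove j) (j.predAbove i) = f i j) :
    ∑ i : Fin (n + 2), ∑ j : Fin (n + 1), (-1 : R) ^ ((i : ℕ) + j) • f i j = 0 := by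
  rw [← Finset.sum_product']
  refine Finset.sum_ninvolution (fun p ↦ (p.1.succAbove p.2, p.2.predAbove p.1))
    (fun p ↦ ?_) (fun p _ ↦ ?_) (fun _ ↦ mem_univ _) (fun p ↦ ?_)
  · rw [hf, Fin.neg_one_pow_succAbove_add_predAbove, neg_smul, add_neg_cancel]
  · exact fun h ↦ Fin.succAbove_ne _ _ (congrArg Prod.fst h)
  · exact Prod.ext (Fin.succAbove_succAbove_predAbove _ _) (Fin.predAbove_predAbove_succAbove _ _)

theorem quotient_mul_quotient_eq {α R : Type*} [LE α] [MonoidWithZero R] [IsRightCancelMulZero R]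
    {K : Set α} {w : α → R} {q : α → α → R} (hw0 : ∀ σ ∈ K, w σ ≠ 0)
    (hq : ∀ σ ∈ K, ∀ τ ∈ K, τ ≤ σ → w σ = q σ τ * w τ) {A B B' C : α} (hA : A ∈ K)
    (hB : B ∈ K) (hB' : B' ∈ K) (hC : C ∈ K) (hBA : B ≤ A) (hCB : C ≤ B) (hB'A : B' ≤ A)
    (hCB' : C ≤ B') : q A B * q B C = q A B' * q B' C :=
  mul_right_cancel₀ (hw0 C hC) <| by
    rw [mul_assoc, ← hq B hB C hC hCB, ← hq A hA B hB hBA, mul_assoc, ← hq B' hB' C hC hCB',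
      ← hq A hA B' hB' hB'A]

section OrderedSimplex

variable {V : Type*} [DecidableEq V] {K : Set (Finset V)} {n : ℕ}

abbrev OrderedSimplex (K : Set (Finset V)) (n : ℕ) :=
  {σ : Fin n ↪ V // univ.image σ ∈ K}

def OrderedSimplex.vertices (σ : OrderedSimplex K n) : Finset V :=
  univ.image σ.1

theorem image_succAboveEmb_trans_subset (σ : Fin (n + 1) ↪ V) (i : Fin (n + 1)) :
    univ.image ((Fin.succAboveEmb i).trans σ) ⊆ univ.image σ :=
  image_subset_iff.2 fun _ _ ↦ mem_image_of_mem σ (mem_univ _)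

def OrderedSimplex.face (hK : ∀ σ ∈ K, ∀ τ : Finset V, τ ⊆ σ → τ.Nonempty → τ ∈ K)
    (σ : OrderedSimplex K (n + 2)) (i : Fin (n + 2)) : OrderedSimplex K (n + 1) :=
  ⟨(Fin.succAboveEmb i).trans σ.1,
    hK _ σ.2 _ (image_succAboveEmb_trans_subset σ.1 i) (univ_nonempty.image _)⟩

variable (hK : ∀ σ ∈ K, ∀ τ : Finset V, τ ⊆ σ → τ.Nonempty → τ ∈ K)

theorem OrderedSimplex.face_injective (σ : OrderedSimplex K (n + 2)) :
    Injective (σ.face hK) := fun _ _ h ↦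
  Fin.succAbove_left_injective <| funext fun k ↦
    σ.1.injective <| DFunLike.congr_fun (congrArg Subtype.val h) k

theorem OrderedSimplex.vertices_face_subset (σ : OrderedSimplex K (n + 2)) (i : Fin (n + 2)) :
    (σ.face hK i).vertices ⊆ σ.vertices :=
  image_succAboveEmb_trans_subset σ.1 i

theorem OrderedSimplex.face_face_succAbove_predAbove (σ : OrderedSimplex K (n + 3))
    (i : Fin (n + 3)) (j : Fin (n + 2)) :
    (σ.face hK (i.succAbove j)).face hK (j.predAbove i) = (σ.face hK i).face hK j :=
  Subtype.ext <| DFunLike.ext _ _ fun k ↦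
    congrArg σ.1 (Fin.succAbove_succAbove_succAbove_predAbove i j k)

theorem OrderedSimplex.sum_sum_face_face_eq_zero {R : Type*} [CommRing R] [IsDomain R]
    {w : Finset V → R} (hw0 : ∀ σ ∈ K, w σ ≠ 0) {q : Finset V → Finset V → R}
    (hq : ∀ σ ∈ K, ∀ τ ∈ K, τ ⊆ σ → w σ = q σ τ * w τ) (σ : OrderedSimplex K (n + 3)) :
    ∑ i : Fin (n + 3), ∑ j : Fin (n + 2),
      ((-1 : R) ^ (i : ℕ) * q σ.vertices (σ.face hK i).vertices *
        ((-1) ^ (j : ℕ) * q (σ.face hK i).vertices ((σ.face hK i).face hK j).vertices)) •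
        Finsupp.single ((σ.face hK i).face hK j) (1 : R) = 0 := by
  calc _ = ∑ i : Fin (n + 3), ∑ j : Fin (n + 2), (-1 : R) ^ ((i : ℕ) + j) •
        (q σ.vertices (σ.face hK i).vertices *
          q (σ.face hK i).vertices ((σ.face hK i).face hK j).vertices) •
          Finsupp.single ((σ.face hK i).face hK j) (1 : R) := by
        simp only [smul_smul, pow_add]
        congr! 3
        ring
    _ = 0 := Fin.sum_sum_neg_one_pow_smul_eq_zero _ fun i j ↦ by
        have hface := σ.face_face_succAbove_predAbove hK i j
        rw [hface]
        congr 1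
        exact quotient_mul_quotient_eq hw0 hq σ.2 (σ.face hK _).2 (σ.face hK i).2
          ((σ.face hK i).face hK j).2 (σ.vertices_face_subset hK _)
          (hface ▸ (σ.face hK _).vertices_face_subset hK _)
          (σ.vertices_face_subset hK i) ((σ.face hK i).vertices_face_subset hK j)

end OrderedSimplex

theorem weighted_boundary_squared_eq_zero_general
    {V R : Type*} [DecidableEq V] [CommRing R] [IsDomain R]
    (K : Set (Finset V))
    (hKclosed : ∀ σ ∈ K, ∀ τ : Finset V, τ ⊆ σ → τ.Nonempty → τ ∈ K)
    (w : Finset V → R)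
    (hw0 : ∀ σ ∈ K, w σ ≠ 0)
    (q : Finset V → Finset V → R)
    (hq : ∀ σ ∈ K, ∀ τ ∈ K, τ ⊆ σ → w σ = q σ τ * w τ)
    (bd : ∀ m : ℕ,
      ({σ : Fin (m + 2) ↪ V // Finset.univ.image σ ∈ K} →₀ R) →ₗ[R]
        ({τ : Fin (m + 1) ↪ V // Finset.univ.image τ ∈ K} →₀ R))
    (hbd : ∀ (m : ℕ) (σ : {σ : Fin (m + 2) ↪ V // Finset.univ.image σ ∈ K})
        (τ : {τ : Fin (m + 1) ↪ V // Finset.univ.image τ ∈ K}) (i : Fin (m + 2)),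
        (τ : Fin (m + 1) ↪ V) = (Fin.succAboveEmb i).trans σ.1 →
        (bd m (Finsupp.single σ 1)) τ =
          (-1 : R) ^ (i : ℕ) * q (Finset.univ.image σ.1) (Finset.univ.image τ.1))
    (hbd0 : ∀ (m : ℕ) (σ : {σ : Fin (m + 2) ↪ V // Finset.univ.image σ ∈ K})
        (τ : {τ : Fin (m + 1) ↪ V // Finset.univ.image τ ∈ K}),
        (∀ i : Fin (m + 2), (τ : Fin (m + 1) ↪ V) ≠ (Fin.succAboveEmb i).trans σ.1) →
        (bd m (Finsupp.single σ 1)) τ = 0) :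
    ∀ m : ℕ, (bd m).comp (bd (m + 1)) = 0 := by
  have bd_single (n : ℕ) (σ : OrderedSimplex K (n + 2)) : bd n (Finsupp.single σ 1) =
      ∑ i : Fin (n + 2), ((-1 : R) ^ (i : ℕ) * q σ.vertices (σ.face hKclosed i).vertices) •
        Finsupp.single (σ.face hKclosed i) 1 := by
    simp_rw [Finsupp.smul_single_one]
    exact Finsupp.eq_sum_single_of_injective (σ.face_injective hKclosed) _ _
      (fun i ↦ hbd n σ _ i rfl) fun τ hτ ↦ hbd0 n σ τ fun i h ↦ hτ i (Subtype.ext h)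
  intro m
  refine Finsupp.lhom_ext' fun (σ : OrderedSimplex K (m + 3)) ↦ LinearMap.ext_ring ?_
  simp only [LinearMap.comp_apply, Finsupp.lsingle_apply, LinearMap.zero_apply]
  rw [bd_single, map_sum]
  simp_rw [map_smul, bd_single, Finset.smul_sum, smul_smul]
  exact OrderedSimplex.sum_sum_face_face_eq_zero hKclosed hw0 hq σ

/-- For a weighted simplicial complex `(K, w)` over an integral domain `R` with
all weights nonzero (weights dividing along faces, with quotient function `q`, i.e.
`w σ = q σ τ * w τ` for `τ ⊆ σ`), the weighted boundary maps
`∂ σ = Σ_i (w σ / w (dᵢ σ)) (−1)ⁱ dᵢ σ` on the chain modules (free `R`-modules on the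
ordered simplices of `K`, encoded as injective tuples whose vertex set lies in `K`)
satisfy `∂ ∘ ∂ = 0`. -/
theorem weighted_boundary_squared_eq_zero
    {V R : Type*} [DecidableEq V] [CommRing R] [IsDomain R]
    (K : Set (Finset V))
    (hKne : ∀ σ ∈ K, σ.Nonempty)
    (hKclosed : ∀ σ ∈ K, ∀ τ : Finset V, τ ⊆ σ → τ.Nonempty → τ ∈ K)
    (w : Finset V → R)
    (hw0 : ∀ σ ∈ K, w σ ≠ 0)
    (q : Finset V → Finset V → R)
    (hq : ∀ σ ∈ K, ∀ τ ∈ K, τ ⊆ σ → w σ = q σ τ * w τ)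
    (bd : ∀ m : ℕ,
      ({σ : Fin (m + 2) ↪ V // Finset.univ.image σ ∈ K} →₀ R) →ₗ[R]
        ({τ : Fin (m + 1) ↪ V // Finset.univ.image τ ∈ K} →₀ R))
    (hbd : ∀ (m : ℕ) (σ : {σ : Fin (m + 2) ↪ V // Finset.univ.image σ ∈ K})
        (τ : {τ : Fin (m + 1) ↪ V // Finset.univ.image τ ∈ K}) (i : Fin (m + 2)),
        (τ : Fin (m + 1) ↪ V) = (Fin.succAboveEmb i).trans σ.1 →
        (bd m (Finsupp.single σ 1)) τ =
          (-1 : R) ^ (i : ℕ) * q (Finset.univ.image σ.1) (Finset.univ.image τ.1))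
    (hbd0 : ∀ (m : ℕ) (σ : {σ : Fin (m + 2) ↪ V // Finset.univ.image σ ∈ K})
        (τ : {τ : Fin (m + 1) ↪ V // Finset.univ.image τ ∈ K}),
        (∀ i : Fin (m + 2), (τ : Fin (m + 1) ↪ V) ≠ (Fin.succAboveEmb i).trans σ.1) →
        (bd m (Finsupp.single σ 1)) τ = 0) :
    ∀ m : ℕ, (bd m).comp (bd (m + 1)) = 0 :=
  weighted_boundary_squared_eq_zero_general K hKclosed w hw0 q hq bd hbd hbd0
end

section
/- For a finite point set X ⊂ ℝⁿ and a nonnegative integer k ≤ |X|, the k-distance function d_{X,k}, defined by d_{X,k}²(x) = (1/k) Σ_{x_i ∈ NN_X^k(x)} d²(x, x_i), satisfies d_{X,k}²(x) = min over subsets S ⊆ X with |S| = k of ( d²(x, x̄_S) − w_{x̄_S} ), where x̄_S is the barycenter of S and w_{x̄_S} = −(1/k) Σ_{x_i ∈ S} d²(x̄_S, x_i). -/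
/-!
The two minima run over the same `k`-subsets `S`, and they agree term by term: expanding
`‖p - xᵢ‖² = ‖(p - x̄_S) + (x̄_S - xᵢ)‖²` and summing over `S`, the cross terms vanish because
`∑_{i ∈ S} (x̄_S - xᵢ) = 0` (the parallel-axis theorem).
-/

open Finset

/-- The barycenter of the `k`-point subset `S` of the point cloud `x`. -/
noncomputable def kBary {n N : ℕ} (x : Fin N → EuclideanSpace ℝ (Fin n)) (k : ℕ)
    (S : Finset (Fin N)) : EuclideanSpace ℝ (Fin n) :=
  (k : ℝ)⁻¹ • ∑ i ∈ S, x i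

/-- The weight `w_{x̄_S} = -(1/k) Σ_{x_i ∈ S} d²(x̄_S, x_i)` of the barycenter of `S`. -/
noncomputable def kWeight {n N : ℕ} (x : Fin N → EuclideanSpace ℝ (Fin n)) (k : ℕ)
    (S : Finset (Fin N)) : ℝ :=
  -((k : ℝ)⁻¹ * ∑ i ∈ S, dist (kBary x k S) (x i) ^ 2)

section Variance

variable {ι E : Type*}

theorem Finset.sum_inv_card_smul_sum_sub_eq_zero [AddCommGroup E] [Module ℝ E]
    (S : Finset ι) (x : ι → E) :
    ∑ i ∈ S, ((#S : ℝ)⁻¹ • ∑ j ∈ S, x j - x i) = 0 := by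
  rcases S.eq_empty_or_nonempty with rfl | hS
  · simp
  rw [sum_sub_distrib, sum_const, ← Nat.cast_smul_eq_nsmul ℝ,
    smul_inv_smul₀ (by exact_mod_cast hS.card_pos.ne'), sub_self]

variable [NormedAddCommGroup E] [InnerProductSpace ℝ E]

theorem Finset.sum_dist_sq_eq_of_sum_sub_eq_zero (S : Finset ι) (x : ι → E) (p q : E)
    (hq : ∑ i ∈ S, (q - x i) = 0) :
    ∑ i ∈ S, dist p (x i) ^ 2 = #S * dist p q ^ 2 + ∑ i ∈ S, dist q (x i) ^ 2 := by
  have expand (i : ι) : dist p (x i) ^ 2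
      = dist p q ^ 2 + 2 * inner ℝ (p - q) (q - x i) + dist q (x i) ^ 2 := by
    rw [dist_eq_norm, dist_eq_norm, dist_eq_norm, ← norm_add_sq_real, sub_add_sub_cancel]
  simp only [expand, sum_add_distrib, sum_const, nsmul_eq_mul, ← mul_sum, ← inner_sum, hq,
    inner_zero_right, mul_zero, add_zero]

theorem Finset.sum_dist_sq_eq_card_mul_dist_sq_centroid_add (S : Finset ι) (x : ι → E) (p : E) :
    ∑ i ∈ S, dist p (x i) ^ 2
      = #S * dist p ((#S : ℝ)⁻¹ • ∑ j ∈ S, x j) ^ 2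
        + ∑ i ∈ S, dist ((#S : ℝ)⁻¹ • ∑ j ∈ S, x j) (x i) ^ 2 :=
  S.sum_dist_sq_eq_of_sum_sub_eq_zero x p _ (S.sum_inv_card_smul_sum_sub_eq_zero x)

end Variance

/-- the squared `k`-distance
`d²_{X,k}(p) = min over k-subsets S of (1/k) Σ_{x_i ∈ S} d²(p, x_i)` (the minimum being
attained at the `k` nearest neighbors) equals the power distance
`min over k-subsets S of (d²(p, x̄_S) − w_{x̄_S})`. -/
theorem kDistance_sq_eq_powerDistance
    {n N k : ℕ} (x : Fin N → EuclideanSpace ℝ (Fin n)) (hk : 0 < k) (hkN : k ≤ N)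
    (p : EuclideanSpace ℝ (Fin n)) :
    (Finset.univ.powersetCard k).inf'
        (Finset.powersetCard_nonempty.2 (by simpa using hkN))
        (fun S => (k : ℝ)⁻¹ * ∑ i ∈ S, dist p (x i) ^ 2)
      = (Finset.univ.powersetCard k).inf'
        (Finset.powersetCard_nonempty.2 (by simpa using hkN))
        (fun S => dist p (kBary x k S) ^ 2 - kWeight x k S) := by
  refine inf'_congr _ rfl fun S hS => ?_
  obtain rfl := (mem_powersetCard.1 hS).2
  rw [kWeight, kBary, sum_dist_sq_eq_card_mul_dist_sq_centroid_add, mul_add,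
    inv_mul_cancel_left₀ (by exact_mod_cast hk.ne'), sub_neg_eq_add]
end

section
/- For a finite point set X ⊂ ℝⁿ and integer k ≥ 1, the sublevel set d_{X,k}⁻¹([0, t]) of the k-distance function is a finite union of closed balls: d_{X,k}⁻¹([0, t]) = ⋃_{S ⊆ X, |S| = k} B̄(x̄_S, (t² + w_{x̄_S})^{1/2}), where the ball is empty when t² + w_{x̄_S} < 0. -/
open Finset

/-- The `k`-distance to the point cloud `x`:
`d_{X,k}(p) = ((min over k-subsets S) (1/k) Σ_{x_i ∈ S} d²(p, x_i))^{1/2}`. -/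
noncomputable def kDistance {n N : ℕ} (x : Fin N → EuclideanSpace ℝ (Fin n)) {k : ℕ}
    (hkN : k ≤ N) (p : EuclideanSpace ℝ (Fin n)) : ℝ :=
  Real.sqrt ((Finset.univ.powersetCard k).inf'
    (Finset.powersetCard_nonempty.2 (by simpa using hkN))
    (fun S => (k : ℝ)⁻¹ * ∑ i ∈ S, dist p (x i) ^ 2))

theorem sum_dist_sq_eq_card_mul_dist_sq_add {E ι : Type*} [NormedAddCommGroup E]
    [InnerProductSpace ℝ E] (s : Finset ι) (x : ι → E) {c : E}
    (hc : ∑ i ∈ s, (c - x i) = 0) (p : E) :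
    ∑ i ∈ s, dist p (x i) ^ 2 = #s * dist p c ^ 2 + ∑ i ∈ s, dist c (x i) ^ 2 := by
  have expand (i : ι) : dist p (x i) ^ 2
      = dist p c ^ 2 + 2 * inner ℝ (p - c) (c - x i) + dist c (x i) ^ 2 := by
    simp only [dist_eq_norm]
    rw [← norm_add_sq_real, sub_add_sub_cancel]
  simp only [expand, sum_add_distrib, sum_const, nsmul_eq_mul, ← mul_sum, ← inner_sum, hc,
    inner_zero_right, mul_zero, add_zero]

section KDistance

variable {n N : ℕ} (x : Fin N → EuclideanSpace ℝ (Fin n)) {k : ℕ}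

theorem sum_kBary_sub_eq_zero (hk : k ≠ 0) {S : Finset (Fin N)} (hS : #S = k) :
    ∑ i ∈ S, (kBary x k S - x i) = 0 := by
  have hk' : (k : ℝ) ≠ 0 := Nat.cast_ne_zero.2 hk
  rw [sum_sub_distrib, sum_const, hS, kBary, ← Nat.cast_smul_eq_nsmul ℝ, smul_smul,
    mul_inv_cancel₀ hk', one_smul, sub_self]

theorem inv_mul_sum_dist_sq_eq_dist_kBary_sq_sub_kWeight (hk : k ≠ 0) {S : Finset (Fin N)}
    (hS : #S = k) (p : EuclideanSpace ℝ (Fin n)) :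
    (k : ℝ)⁻¹ * ∑ i ∈ S, dist p (x i) ^ 2 = dist p (kBary x k S) ^ 2 - kWeight x k S := by
  have hk' : (k : ℝ) ≠ 0 := Nat.cast_ne_zero.2 hk
  rw [sum_dist_sq_eq_card_mul_dist_sq_add S x (sum_kBary_sub_eq_zero x hk hS), hS, kWeight,
    mul_add, inv_mul_cancel_left₀ hk', sub_neg_eq_add]

theorem kDistance_nonneg (hkN : k ≤ N) (p : EuclideanSpace ℝ (Fin n)) :
    0 ≤ kDistance x hkN p :=
  Real.sqrt_nonneg _

theorem kDistance_le_iff (hk : k ≠ 0) (hkN : k ≤ N) {t : ℝ} (ht : 0 ≤ t)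
    (p : EuclideanSpace ℝ (Fin n)) :
    kDistance x hkN p ≤ t ↔
      ∃ S ∈ univ.powersetCard k, dist p (kBary x k S) ^ 2 - kWeight x k S ≤ t ^ 2 := by
  rw [kDistance, Real.sqrt_le_left ht, inf'_le_iff]
  refine exists_congr fun S => and_congr_right fun hS => ?_
  rw [inv_mul_sum_dist_sq_eq_dist_kBary_sq_sub_kWeight x hk (mem_powersetCard.1 hS).2]

end KDistance

/-- The `if` is needed because `Real.sqrt` of a negative number is `0`, so the bare
`closedBall c (√r)` would be `{c}` rather than empty when `r < 0`. -/
theorem mem_ite_closedBall_sqrt_iff {α : Type*} [PseudoMetricSpace α] {p c : α} {r : ℝ} :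
    p ∈ (if 0 ≤ r then Metric.closedBall c (Real.sqrt r) else ∅) ↔ dist p c ^ 2 ≤ r := by
  split_ifs with hr
  · rw [Metric.mem_closedBall, Real.le_sqrt dist_nonneg hr]
  · simp only [Set.mem_empty_iff_false, false_iff, not_le]
    exact (lt_of_not_ge hr).trans_le (sq_nonneg _)

/-- the sublevel set `d_{X,k}⁻¹([0,t])` of the `k`-distance is the finite union,
over `k`-subsets `S` of the point cloud, of the closed balls centered at the barycenters
`x̄_S` of radius `(t² + w_{x̄_S})^{1/2}`, this ball being empty when `t² + w_{x̄_S} < 0`. -/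
theorem kDistance_sublevel_eq_union_closedBalls
    {n N k : ℕ} (x : Fin N → EuclideanSpace ℝ (Fin n)) (hk : 1 ≤ k) (hkN : k ≤ N)
    (t : ℝ) (ht : 0 ≤ t) :
    kDistance x hkN ⁻¹' Set.Icc 0 t
      = ⋃ S ∈ Finset.univ.powersetCard k,
          if 0 ≤ t ^ 2 + kWeight x k S then
            Metric.closedBall (kBary x k S) (Real.sqrt (t ^ 2 + kWeight x k S))
          else ∅ := by
  ext p
  simp only [Set.mem_preimage, Set.mem_Icc, kDistance_nonneg, true_and,
    kDistance_le_iff x (by omega) hkN ht, sub_le_iff_le_add, Set.mem_iUnion, exists_prop,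
    mem_ite_closedBall_sqrt_iff]
end

section
/- Let (K, w) be a weighted simplicial complex over an integral domain R with nonzero weights, and let K be connected with all vertices of weight 1. Then the weighted 0-th homology satisfies H₀(K, w) = C₀(K)/im(∂₁), where im(∂₁) is generated by the elements w([u,v])·(v − u) over all edges [u,v] of K. In the special case that all edges also have weight 1, H₀(K, w) ≅ R. -/
/-- Let `(K, w)` be a connected weighted simplicial complex over an integral
domain `R` with nonzero weights, all of whose vertices have weight `1`. Then
`H₀(K, w) = C₀(K)/im ∂₁`, where `im ∂₁` is the submodule generated by the elements
`w([u,v])·(v − u)` over all edges `[u,v]` of `K`; and in the special case that all edges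
also have weight `1`, `H₀(K, w) ≅ R`. -/
theorem weighted_H0_of_connected
    {V R : Type*} [DecidableEq V] [LinearOrder V] [CommRing R] [IsDomain R]
    (K : Set (Finset V))
    (hKne : ∀ σ ∈ K, σ.Nonempty)
    (hKclosed : ∀ σ ∈ K, ∀ τ : Finset V, τ ⊆ σ → τ.Nonempty → τ ∈ K)
    (w : Finset V → R) (hw0 : ∀ σ ∈ K, w σ ≠ 0)
    (hdvd : ∀ σ ∈ K, ∀ τ ∈ K, τ ⊆ σ → w τ ∣ w σ)
    -- there is at least one vertex, and all vertices have weight 1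
    (hne : ∃ p : V, ({p} : Finset V) ∈ K)
    (hvtx : ∀ p : V, ({p} : Finset V) ∈ K → w {p} = 1)
    -- `K` is connected: any two vertices are joined by an edge path
    (hconn : ∀ u v : {p : V // ({p} : Finset V) ∈ K},
      Relation.ReflTransGen
        (fun a b : {p : V // ({p} : Finset V) ∈ K} =>
          a.1 ≠ b.1 ∧ ({a.1, b.1} : Finset V) ∈ K) u v)
    -- the weighted boundary map `∂₁`, with `∂₁([u,v]) = w([u,v])·([v] − [u])`
    -- (vertex weights being `1`)
    (bd1 : ({e : Finset V // e ∈ K ∧ e.card = 2} →₀ R) →ₗ[R]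
      ({p : V // ({p} : Finset V) ∈ K} →₀ R))
    (hbd1 : ∀ (e : {e : Finset V // e ∈ K ∧ e.card = 2})
        (u v : {p : V // ({p} : Finset V) ∈ K}), u.1 < v.1 → e.1 = {u.1, v.1} →
        bd1 (Finsupp.single e 1)
          = w e.1 • (Finsupp.single v (1 : R) - Finsupp.single u 1)) :
    -- `im ∂₁` is generated by the elements `w([u,v])·(v − u)` over all edges `[u,v]`
    LinearMap.range bd1
        = Submodule.span R
          {c | ∃ u v : {p : V // ({p} : Finset V) ∈ K}, u.1 ≠ v.1 ∧
            ({u.1, v.1} : Finset V) ∈ K ∧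
            c = w {u.1, v.1} • (Finsupp.single v (1 : R) - Finsupp.single u 1)} ∧
      -- if moreover all edges have weight 1, then `H₀(K, w) = C₀/im ∂₁ ≅ R`
      ((∀ e ∈ K, e.card = 2 → w e = 1) →
        Nonempty ((({p : V // ({p} : Finset V) ∈ K} →₀ R) ⧸ LinearMap.range bd1)
          ≃ₗ[R] R)) := by
  classical
  set S : Set ({p : V // ({p} : Finset V) ∈ K} →₀ R) :=
    {c | ∃ u v : {p : V // ({p} : Finset V) ∈ K}, u.1 ≠ v.1 ∧
      ({u.1, v.1} : Finset V) ∈ K ∧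
      c = w {u.1, v.1} • (Finsupp.single v (1 : R) - Finsupp.single u 1)} with hS
  -- every edge decomposes as an ordered pair of vertices
  have key : ∀ e : {e : Finset V // e ∈ K ∧ e.card = 2},
      ∃ u v : {p : V // ({p} : Finset V) ∈ K}, u.1 < v.1 ∧ e.1 = {u.1, v.1} := by
    rintro ⟨e, heK, hcard⟩
    obtain ⟨a, b, hab, rfl⟩ := Finset.card_eq_two.mp hcard
    have haK : ({a} : Finset V) ∈ K := hKclosed _ heK {a} (by simp) (by simp)
    have hbK : ({b} : Finset V) ∈ K := hKclosed _ heK {b} (by simp) (by simp)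
    rcases lt_or_gt_of_ne hab with h | h
    · exact ⟨⟨a, haK⟩, ⟨b, hbK⟩, h, rfl⟩
    · exact ⟨⟨b, hbK⟩, ⟨a, haK⟩, h, Finset.pair_comm a b⟩
  have h1 : LinearMap.range bd1 ≤ Submodule.span R S := by
    rintro _ ⟨x, rfl⟩
    induction x using Finsupp.induction_linear with
    | zero => simpa using Submodule.zero_mem _
    | add f g hf hg => rw [map_add]; exact Submodule.add_mem _ hf hg
    | single e r =>
      have hx : Finsupp.single e r = r • Finsupp.single e 1 := by
        rw [Finsupp.smul_single, smul_eq_mul, mul_one]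
      rw [hx, map_smul]
      apply Submodule.smul_mem
      obtain ⟨u, v, huv, he⟩ := key e
      rw [hbd1 e u v huv he]
      exact Submodule.subset_span ⟨u, v, ne_of_lt huv, he ▸ e.2.1, by rw [← he]⟩
  have h2 : Submodule.span R S ≤ LinearMap.range bd1 := by
    rw [Submodule.span_le]
    rintro c ⟨u, v, huv, hK2, rfl⟩
    have hcard : ({u.1, v.1} : Finset V).card = 2 := Finset.card_pair huv
    set e : {e : Finset V // e ∈ K ∧ e.card = 2} := ⟨{u.1, v.1}, hK2, hcard⟩ with he
    rcases huv.lt_or_gt with h | h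
    · exact ⟨Finsupp.single e 1, hbd1 e u v h rfl⟩
    · refine ⟨-Finsupp.single e 1, ?_⟩
      rw [map_neg, hbd1 e v u h (Finset.pair_comm u.1 v.1)]
      show -(w {u.1, v.1} • (Finsupp.single u (1 : R) - Finsupp.single v 1)) = _
      rw [smul_sub, smul_sub, neg_sub]
  refine ⟨le_antisymm h1 h2, fun hw1 => ?_⟩
  obtain ⟨p, hpK⟩ := hne
  set p₀ : {p : V // ({p} : Finset V) ∈ K} := ⟨p, hpK⟩ with hp₀
  let ε : ({p : V // ({p} : Finset V) ∈ K} →₀ R) →ₗ[R] R :=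
    Finsupp.linearCombination R (fun _ => (1 : R))
  have hεsingle : ∀ (a : {p : V // ({p} : Finset V) ∈ K}) (r : R),
      ε (Finsupp.single a r) = r := by
    intro a r
    simp [ε, Finsupp.linearCombination_single]
  have hεsurj : Function.Surjective ε := fun r => ⟨Finsupp.single p₀ r, hεsingle _ _⟩
  -- each `single v 1 - single p₀ 1` lies in the range
  have step : ∀ v : {p : V // ({p} : Finset V) ∈ K},
      Finsupp.single v (1 : R) - Finsupp.single p₀ 1 ∈ LinearMap.range bd1 := by
    intro v
    induction hconn p₀ v with
    | refl => simpa using Submodule.zero_mem _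
    | @tail b c hb hbc ih =>
      have hedge : Finsupp.single c (1 : R) - Finsupp.single b 1 ∈ LinearMap.range bd1 := by
        have hwbc : w {b.1, c.1} = 1 := hw1 _ hbc.2 (Finset.card_pair hbc.1)
        have hmem := h2 (Submodule.subset_span (⟨b, c, hbc.1, hbc.2, rfl⟩ :
          (w {b.1, c.1} • (Finsupp.single c (1 : R) - Finsupp.single b 1)) ∈ S))
        rwa [hwbc, one_smul] at hmem
      have heq : Finsupp.single c (1 : R) - Finsupp.single p₀ 1
          = (Finsupp.single b 1 - Finsupp.single p₀ 1)
            + (Finsupp.single c 1 - Finsupp.single b 1) := by abel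
      rw [heq]
      exact Submodule.add_mem _ ih hedge
  have hker : LinearMap.ker ε = LinearMap.range bd1 := by
    apply le_antisymm
    · intro x hx
      have hx0 : ∑ v ∈ x.support, x v = 0 := by
        have := hx
        simpa [ε, LinearMap.mem_ker, Finsupp.linearCombination_apply, Finsupp.sum] using this
      have hrep : x = ∑ v ∈ x.support,
          x v • (Finsupp.single v (1 : R) - Finsupp.single p₀ 1) := by
        have h1' : ∑ v ∈ x.support, x v • Finsupp.single v (1 : R) = x := by
          conv_rhs => rw [← Finsupp.sum_single x]
          simp [Finsupp.sum, Finsupp.smul_single]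
        have h2' : ∑ v ∈ x.support, x v • Finsupp.single p₀ (1 : R) = 0 := by
          rw [← Finset.sum_smul, hx0, zero_smul]
        simp only [smul_sub]
        rw [Finset.sum_sub_distrib, h1', h2', sub_zero]
      rw [hrep]
      exact Submodule.sum_mem _ fun v _ => Submodule.smul_mem _ _ (step v)
    · rw [le_antisymm h1 h2, Submodule.span_le]
      rintro c ⟨u, v, huv, hK2, rfl⟩
      have hwuv : w {u.1, v.1} = 1 := hw1 _ hK2 (Finset.card_pair huv)
      simp [LinearMap.mem_ker, hwuv, map_sub, hεsingle]
  have equiv := LinearMap.quotKerEquivOfSurjective ε hεsurj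
  rw [hker] at equiv
  exact ⟨equiv⟩
end
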